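/- Let 1 < p ≤ q and a ≥ 0, and set H(s) = s^p + a·s^q. Let φ_{p,σ} and φ_{q,σ} denote the shifted N-functions of s^p and s^q with shift σ ≥ 0, let H_σ denote the shifted N-function of H, and define V_H(Q) := sqrt(H'(1+|Q|)/(1+|Q|))·Q, V_p(Q) := sqrt(p(1+|Q|)^{p−2})·Q, V_q(Q) := sqrt(q(1+|Q|)^{q−2})·Q for Q ∈ ℝ^{N×n}. Then there exists c = c(p,q,N,n) ≥ 1 such that for all P, Q ∈ ℝ^{N×n} the three quantities |V_H(P) − V_H(Q)|², H_{1+|Q|}(|P−Q|), and φ_{p,1+|Q|}(|P−Q|) + a·φ_{q,1+|Q|}(|P−Q|) are pairwise comparable up to the factor c, they are each comparable up to the factor c to |V_p(P) − V_p(Q)|² + a·|V_q(P) − V_q(Q)|², and moreover |V_H(P) − V_H(Q)|² ≥ c⁻¹·|V_p(P) − V_p(Q)|². -/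

import Mathlib

open MeasureTheory Real Set
open scoped RealInnerProductSpace

/-- The shifted N-function `ψ_σ(s) = ∫₀^s ψ'(σ+t)·t/(σ+t) dt`, expressed through the
derivative `ψ'`. -/
noncomputable def shifted (ψ' : ℝ → ℝ) (σ s : ℝ) : ℝ :=
  ∫ t in (0:ℝ)..s, ψ' (σ + t) * t / (σ + t)

/-- First derivative `H'(s) = p·s^{p−1} + a·q·s^{q−1}` of the double phase function
`H(s) = s^p + a·s^q`. -/
noncomputable def dpH' (p q a s : ℝ) : ℝ :=
  p * s ^ (p - 1) + a * q * s ^ (q - 1)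

/-- `V_H(Q) = sqrt(H'(1+|Q|)/(1+|Q|))·Q` for the double phase function. -/
noncomputable def VH {E : Type*} [NormedAddCommGroup E] [NormedSpace ℝ E]
    (p q a : ℝ) (Q : E) : E :=
  Real.sqrt (dpH' p q a (1 + ‖Q‖) / (1 + ‖Q‖)) • Q

/-- `V_p(Q) = sqrt(p·(1+|Q|)^{p−2})·Q` for the power function `s^p`. -/
noncomputable def Vpow {E : Type*} [NormedAddCommGroup E] [NormedSpace ℝ E]
    (p : ℝ) (Q : E) : E :=
  Real.sqrt (p * (1 + ‖Q‖) ^ (p - 2)) • Q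

/-- Two quantities are comparable up to the factor `c`. -/
def Comp (c x y : ℝ) : Prop := x ≤ c * y ∧ y ≤ c * x

noncomputable def ww (p q b t : ℝ) : ℝ := p * t ^ (p-2) + b * q * t ^ (q-2)
noncomputable def ww' (p q b t : ℝ) : ℝ := p * (p-2) * t ^ (p-3) + b * q * (q-2) * t ^ (q-3)
noncomputable def ff (p q b r : ℝ) : ℝ := Real.sqrt (ww p q b (1+r)) * r

lemma ww_pos {p q b t : ℝ} (hp : 1 < p) (hpq : p ≤ q) (hb : 0 ≤ b) (ht : 0 < t) :
    0 < ww p q b t := by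
  have hp0 : 0 < p := lt_trans one_pos hp
  have hq : 0 < q := lt_of_lt_of_le hp0 hpq
  have h1 : 0 < p * t ^ (p-2) := by positivity
  have h2 : 0 ≤ b * q * t ^ (q-2) := by positivity
  unfold ww; linarith

lemma ww'_mul_lower {p q b t : ℝ} (hp : 1 < p) (hpq : p ≤ q) (hb : 0 ≤ b) (ht : 0 < t) :
    -(ww p q b t) ≤ ww' p q b t * t := by
  have hp0 : 0 < p := lt_trans one_pos hp
  have hq : 0 < q := lt_of_lt_of_le hp0 hpq
  have e1 : t ^ (p-3) * t = t ^ (p-2) := by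
    rw [← Real.rpow_add_one (ne_of_gt ht)]; ring_nf
  have e2 : t ^ (q-3) * t = t ^ (q-2) := by
    rw [← Real.rpow_add_one (ne_of_gt ht)]; ring_nf
  have h1 : 0 < t ^ (p-2) := Real.rpow_pos_of_pos ht _
  have h2 : 0 < t ^ (q-2) := Real.rpow_pos_of_pos ht _
  have k1 : p * (p-2) * t ^ (p-3) * t = p * (p-2) * t ^ (p-2) := by
    rw [mul_assoc, e1]
  have k2 : b * q * (q-2) * t ^ (q-3) * t = b * q * (q-2) * t ^ (q-2) := by
    rw [mul_assoc, e2]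
  unfold ww ww'
  rw [add_mul, k1, k2]
  nlinarith [mul_nonneg (mul_nonneg hb (le_of_lt hq)) (le_of_lt h2), mul_pos hp0 h1]

lemma ww'_mul_upper {p q b t : ℝ} (hp : 1 < p) (hpq : p ≤ q) (hb : 0 ≤ b) (ht : 0 < t) :
    ww' p q b t * t ≤ q * ww p q b t := by
  have hp0 : 0 < p := lt_trans one_pos hp
  have hq : 0 < q := lt_of_lt_of_le hp0 hpq
  have e1 : t ^ (p-3) * t = t ^ (p-2) := by
    rw [← Real.rpow_add_one (ne_of_gt ht)]; ring_nf
  have e2 : t ^ (q-3) * t = t ^ (q-2) := by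
    rw [← Real.rpow_add_one (ne_of_gt ht)]; ring_nf
  have h1 : 0 < t ^ (p-2) := Real.rpow_pos_of_pos ht _
  have h2 : 0 < t ^ (q-2) := Real.rpow_pos_of_pos ht _
  have k1 : p * (p-2) * t ^ (p-3) * t = p * (p-2) * t ^ (p-2) := by
    rw [mul_assoc, e1]
  have k2 : b * q * (q-2) * t ^ (q-3) * t = b * q * (q-2) * t ^ (q-2) := by
    rw [mul_assoc, e2]
  unfold ww ww'
  rw [add_mul, k1, k2]
  nlinarith [mul_nonneg (mul_nonneg hb (le_of_lt hq)) (le_of_lt h2), mul_pos hp0 h1]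

lemma hasDerivAt_ff {p q b : ℝ} (hp : 1 < p) (hpq : p ≤ q) (hb : 0 ≤ b)
    (r : ℝ) (hr : -1 < r) :
    HasDerivAt (ff p q b)
      (ww' p q b (1+r) / (2 * Real.sqrt (ww p q b (1+r))) * r + Real.sqrt (ww p q b (1+r))) r := by
  have ht : (0:ℝ) < 1 + r := by linarith
  have h1 : HasDerivAt (fun s : ℝ => 1 + s) 1 r := (hasDerivAt_id r).const_add 1
  have hP : HasDerivAt (fun s : ℝ => ((1+s) ^ (p-2) : ℝ)) ((p-2) * (1+r) ^ (p-3)) r := by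
    have h := h1.rpow_const (p := p-2) (Or.inl (ne_of_gt ht))
    rw [show p-2-1 = p-3 by ring] at h
    simpa using h
  have hQ : HasDerivAt (fun s : ℝ => ((1+s) ^ (q-2) : ℝ)) ((q-2) * (1+r) ^ (q-3)) r := by
    have h := h1.rpow_const (p := q-2) (Or.inl (ne_of_gt ht))
    rw [show q-2-1 = q-3 by ring] at h
    simpa using h
  have hw : HasDerivAt (fun s : ℝ => ww p q b (1+s)) (ww' p q b (1+r)) r := by
    have h := (hP.const_mul p).add (hQ.const_mul (b*q))
    have e : p * ((p-2) * (1+r) ^ (p-3)) + b*q * ((q-2) * (1+r) ^ (q-3)) = ww' p q b (1+r) := by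
      unfold ww'; ring
    rw [e] at h
    exact h
  have hwne : ww p q b (1+r) ≠ 0 := ne_of_gt (ww_pos hp hpq hb ht)
  have hs : HasDerivAt (fun s : ℝ => Real.sqrt (ww p q b (1+s)))
      (ww' p q b (1+r) / (2 * Real.sqrt (ww p q b (1+r)))) r := hw.sqrt hwne
  have h := hs.mul (hasDerivAt_id r)
  simp only [mul_one, id_eq] at h
  exact h

lemma ww'_mul_r_lower {p q b t r : ℝ} (hp : 1 < p) (hpq : p ≤ q) (hb : 0 ≤ b)
    (ht : 0 < t) (hr : 0 ≤ r) (hrt : r ≤ t) : -(ww p q b t) ≤ ww' p q b t * r := by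
  rcases le_or_gt 0 (ww' p q b t) with h | h
  · have : 0 ≤ ww' p q b t * r := mul_nonneg h hr
    linarith [ww_pos hp hpq hb ht]
  · have h2 : ww' p q b t * t ≤ ww' p q b t * r := by
      apply mul_le_mul_of_nonpos_left hrt (le_of_lt h)
    linarith [ww'_mul_lower hp hpq hb ht]

lemma ww'_mul_r_upper {p q b t r : ℝ} (hp : 1 < p) (hpq : p ≤ q) (hb : 0 ≤ b)
    (ht : 0 < t) (hr : 0 ≤ r) (hrt : r ≤ t) : ww' p q b t * r ≤ q * ww p q b t := by
  have hq : 0 < q := lt_trans one_pos (lt_of_lt_of_le hp hpq)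
  rcases le_or_gt 0 (ww' p q b t) with h | h
  · have h2 : ww' p q b t * r ≤ ww' p q b t * t := mul_le_mul_of_nonneg_left hrt h
    linarith [ww'_mul_upper hp hpq hb ht]
  · have : ww' p q b t * r ≤ 0 := mul_nonpos_of_nonpos_of_nonneg (le_of_lt h) hr
    nlinarith [ww_pos hp hpq hb ht]

lemma ff'_lower {p q b r : ℝ} (hp : 1 < p) (hpq : p ≤ q) (hb : 0 ≤ b) (hr : 0 ≤ r) :
    Real.sqrt (ww p q b (1+r)) / 2 ≤
      ww' p q b (1+r) / (2 * Real.sqrt (ww p q b (1+r))) * r + Real.sqrt (ww p q b (1+r)) := by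
  have ht : (0:ℝ) < 1 + r := by linarith
  set t := 1 + r with htdef
  have hW : 0 < ww p q b t := ww_pos hp hpq hb ht
  set S := Real.sqrt (ww p q b t) with hSdef
  have hS : 0 < S := Real.sqrt_pos.mpr hW
  have hS2 : S ^ 2 = ww p q b t := Real.sq_sqrt (le_of_lt hW)
  have key : -(ww p q b t) ≤ ww' p q b t * r :=
    ww'_mul_r_lower hp hpq hb ht hr (by linarith)
  have h1 : -(S/2) ≤ ww' p q b t / (2 * S) * r := by
    rw [div_mul_eq_mul_div, le_div_iff₀ (by positivity)]
    nlinarith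
  linarith

lemma ff'_upper {p q b r : ℝ} (hp : 1 < p) (hpq : p ≤ q) (hb : 0 ≤ b) (hr : 0 ≤ r) :
    ww' p q b (1+r) / (2 * Real.sqrt (ww p q b (1+r))) * r + Real.sqrt (ww p q b (1+r)) ≤
      (1 + q/2) * Real.sqrt (ww p q b (1+r)) := by
  have ht : (0:ℝ) < 1 + r := by linarith
  have hq : 0 < q := lt_trans one_pos (lt_of_lt_of_le hp hpq)
  set t := 1 + r with htdef
  have hW : 0 < ww p q b t := ww_pos hp hpq hb ht
  set S := Real.sqrt (ww p q b t) with hSdef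
  have hS : 0 < S := Real.sqrt_pos.mpr hW
  have hS2 : S ^ 2 = ww p q b t := Real.sq_sqrt (le_of_lt hW)
  have key : ww' p q b t * r ≤ q * ww p q b t :=
    ww'_mul_r_upper hp hpq hb ht hr (by linarith)
  have h1 : ww' p q b t / (2 * S) * r ≤ q/2 * S := by
    rw [div_mul_eq_mul_div, div_le_iff₀ (by positivity)]
    nlinarith
  linarith

lemma ff_sub_lower {p q b x y m : ℝ} (hp : 1 < p) (hpq : p ≤ q) (hb : 0 ≤ b)
    (hy : 0 ≤ y) (hxy : y ≤ x)
    (hm : ∀ r ∈ Icc y x, m ≤ Real.sqrt (ww p q b (1+r)) / 2) :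
    m * (x - y) ≤ ff p q b x - ff p q b y := by
  have hcont : ContinuousOn (ff p q b) (Icc y x) := fun r hr =>
    (hasDerivAt_ff hp hpq hb r (by linarith [hr.1])).continuousAt.continuousWithinAt
  have hdiff : DifferentiableOn ℝ (ff p q b) (interior (Icc y x)) := fun r hr => by
    rw [interior_Icc] at hr
    exact (hasDerivAt_ff hp hpq hb r (by linarith [hr.1])).differentiableAt.differentiableWithinAt
  have hder : ∀ r ∈ interior (Icc y x), m ≤ deriv (ff p q b) r := by
    intro r hr
    rw [interior_Icc] at hr
    rw [(hasDerivAt_ff hp hpq hb r (by linarith [hr.1])).deriv]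
    refine le_trans (hm r ⟨le_of_lt hr.1, le_of_lt hr.2⟩) ?_
    exact ff'_lower hp hpq hb (by linarith [hr.1])
  exact (convex_Icc y x).mul_sub_le_image_sub_of_le_deriv hcont hdiff hder y
    (left_mem_Icc.mpr hxy) x (right_mem_Icc.mpr hxy) hxy

lemma ff_sub_upper {p q b x y C : ℝ} (hp : 1 < p) (hpq : p ≤ q) (hb : 0 ≤ b)
    (hy : 0 ≤ y) (hxy : y ≤ x)
    (hC : ∀ r ∈ Icc y x, (1 + q/2) * Real.sqrt (ww p q b (1+r)) ≤ C) :
    ff p q b x - ff p q b y ≤ C * (x - y) := by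
  have hcont : ContinuousOn (ff p q b) (Icc y x) := fun r hr =>
    (hasDerivAt_ff hp hpq hb r (by linarith [hr.1])).continuousAt.continuousWithinAt
  have hdiff : DifferentiableOn ℝ (ff p q b) (interior (Icc y x)) := fun r hr => by
    rw [interior_Icc] at hr
    exact (hasDerivAt_ff hp hpq hb r (by linarith [hr.1])).differentiableAt.differentiableWithinAt
  have hder : ∀ r ∈ interior (Icc y x), deriv (ff p q b) r ≤ C := by
    intro r hr
    rw [interior_Icc] at hr
    rw [(hasDerivAt_ff hp hpq hb r (by linarith [hr.1])).deriv]
    refine le_trans ?_ (hC r ⟨le_of_lt hr.1, le_of_lt hr.2⟩)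
    exact ff'_upper hp hpq hb (by linarith [hr.1])
  exact (convex_Icc y x).image_sub_le_mul_sub_of_deriv_le hcont hdiff hder y
    (left_mem_Icc.mpr hxy) x (right_mem_Icc.mpr hxy) hxy

lemma ff_mono {p q b x y : ℝ} (hp : 1 < p) (hpq : p ≤ q) (hb : 0 ≤ b)
    (hy : 0 ≤ y) (hxy : y ≤ x) : ff p q b y ≤ ff p q b x := by
  have := ff_sub_lower (m := 0) hp hpq hb hy hxy (fun r hr => by
    have : (0:ℝ) < 1 + r := by linarith [hr.1]
    positivity)
  linarith

lemma rpow_double {q β u v : ℝ} (hq1 : 1 ≤ q) (hβl : (-1:ℝ) ≤ β) (hβu : β ≤ q)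
    (hu : 1 ≤ u) (huv : u ≤ v) (hv4 : v ≤ 4*u) :
    v ^ β ≤ 4 ^ q * u ^ β ∧ u ^ β ≤ 4 ^ q * v ^ β := by
  have hu0 : (0:ℝ) < u := lt_of_lt_of_le one_pos hu
  have hv0 : (0:ℝ) < v := lt_of_lt_of_le hu0 huv
  have h4q : (1:ℝ) ≤ 4 ^ q := Real.one_le_rpow (by norm_num) (by linarith)
  rcases le_or_gt 0 β with hβ | hβ
  · constructor
    · calc v ^ β ≤ (4*u) ^ β := Real.rpow_le_rpow (le_of_lt hv0) hv4 hβ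
        _ = 4 ^ β * u ^ β := Real.mul_rpow (by norm_num) (le_of_lt hu0)
        _ ≤ 4 ^ q * u ^ β := by
            have h1 : (4:ℝ) ^ β ≤ 4 ^ q := Real.rpow_le_rpow_of_exponent_le (by norm_num) hβu
            have h2 : (0:ℝ) ≤ u ^ β := le_of_lt (Real.rpow_pos_of_pos hu0 _)
            nlinarith
    · have h1 : u ^ β ≤ v ^ β := Real.rpow_le_rpow (le_of_lt hu0) huv hβ
      have h2 : (0:ℝ) ≤ v ^ β := le_of_lt (Real.rpow_pos_of_pos hv0 _)
      nlinarith
  · constructor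
    · have h1 : v ^ β ≤ u ^ β := Real.rpow_le_rpow_of_nonpos hu0 huv (le_of_lt hβ)
      have h2 : (0:ℝ) ≤ u ^ β := le_of_lt (Real.rpow_pos_of_pos hu0 _)
      nlinarith
    · have hv4' : v/4 ≤ u := by linarith
      have hv40 : (0:ℝ) < v/4 := by linarith
      have h1 : u ^ β ≤ (v/4) ^ β := Real.rpow_le_rpow_of_nonpos hv40 hv4' (le_of_lt hβ)
      have h2 : (v/4) ^ β = v ^ β / 4 ^ β := Real.div_rpow (le_of_lt hv0) (by norm_num : (0:ℝ) ≤ 4) β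
      have h3 : (4:ℝ) ^ (-β) ≤ 4 ^ q := Real.rpow_le_rpow_of_exponent_le (by norm_num)
        (by linarith)
      have h4 : v ^ β / 4 ^ β = v ^ β * 4 ^ (-β) := by
        rw [Real.rpow_neg (by norm_num : (0:ℝ) ≤ 4)]
        rw [div_eq_mul_inv]
      have h5 : (0:ℝ) ≤ v ^ β := le_of_lt (Real.rpow_pos_of_pos hv0 _)
      calc u ^ β ≤ v ^ β * 4 ^ (-β) := by rw [← h4, ← h2]; exact h1
        _ ≤ 4 ^ q * v ^ β := by nlinarith

lemma ww_double {p q b u v : ℝ} (hp : 1 < p) (hpq : p ≤ q) (hb : 0 ≤ b)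
    (hu : 1 ≤ u) (huv : u ≤ v) (hv4 : v ≤ 4*u) :
    ww p q b v ≤ 4 ^ q * ww p q b u ∧ ww p q b u ≤ 4 ^ q * ww p q b v := by
  have hq1 : (1:ℝ) ≤ q := le_of_lt (lt_of_lt_of_le hp hpq)
  have hP := rpow_double (β := p-2) hq1 (by linarith) (by linarith) hu huv hv4
  have hQ := rpow_double (β := q-2) hq1 (by linarith) (by linarith) hu huv hv4
  have hp0 : (0:ℝ) ≤ p := by linarith
  have hbq : (0:ℝ) ≤ b * q := mul_nonneg hb (by linarith)
  constructor <;> (unfold ww; nlinarith [hP.1, hP.2, hQ.1, hQ.2,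
    mul_le_mul_of_nonneg_left hP.1 hp0, mul_le_mul_of_nonneg_left hP.2 hp0,
    mul_le_mul_of_nonneg_left hQ.1 hbq, mul_le_mul_of_nonneg_left hQ.2 hbq])

lemma ww_nonneg {p q b t : ℝ} (hp : 1 < p) (hpq : p ≤ q) (hb : 0 ≤ b) (ht : 0 < t) :
    0 ≤ ww p q b t := (ww_pos hp hpq hb ht).le

lemma ff_nonneg {p q b r : ℝ} (hr : 0 ≤ r) : 0 ≤ ff p q b r := by
  unfold ff; positivity

lemma hard_aux {p q b : ℝ} (hp : 1 < p) (hpq : p ≤ q) (hb : 0 ≤ b)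
    {E : Type*} [NormedAddCommGroup E] [InnerProductSpace ℝ E]
    (P Q : E) (hyx : ‖Q‖ ≤ ‖P‖) :
    ww p q b (1+‖P‖+‖Q‖) * ‖P-Q‖^2 ≤
      (64 * 4^q * (1+q)^2) *
        ‖Real.sqrt (ww p q b (1+‖P‖)) • P - Real.sqrt (ww p q b (1+‖Q‖)) • Q‖^2 ∧
    ‖Real.sqrt (ww p q b (1+‖P‖)) • P - Real.sqrt (ww p q b (1+‖Q‖)) • Q‖^2 ≤
      (64 * 4^q * (1+q)^2) * (ww p q b (1+‖P‖+‖Q‖) * ‖P-Q‖^2) := by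
  have hq1 : (1:ℝ) < q := lt_of_lt_of_le hp hpq
  set x := ‖P‖ with hxdef
  set y := ‖Q‖ with hydef
  set s := ‖P - Q‖ with hsdef
  set ip := ⟪P, Q⟫ with hipdef
  have hx0 : 0 ≤ x := norm_nonneg P
  have hy0 : 0 ≤ y := norm_nonneg Q
  have hs0 : 0 ≤ s := norm_nonneg _
  set ga := Real.sqrt (ww p q b (1+x)) with hgadef
  set gb := Real.sqrt (ww p q b (1+y)) with hgbdef
  have hga0 : 0 ≤ ga := Real.sqrt_nonneg _
  have hgb0 : 0 ≤ gb := Real.sqrt_nonneg _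
  set M := 1 + x + y with hMdef
  set K := (4:ℝ)^q with hKdef
  have hK0 : 0 < K := Real.rpow_pos_of_pos (by norm_num) _
  have hK1 : 1 ≤ K := Real.one_le_rpow (by norm_num) (by linarith)
  have hwM : 0 < ww p q b M := ww_pos hp hpq hb (by simp only [hMdef]; linarith)
  set W := ww p q b M with hWdef
  have key1 : ‖ga • P - gb • Q‖^2 = (ga*x - gb*y)^2 + 2*(ga*gb)*(x*y - ip) := by
    rw [norm_sub_sq_real, real_inner_smul_left, real_inner_smul_right,
      norm_smul, norm_smul, Real.norm_eq_abs, Real.norm_eq_abs,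
      abs_of_nonneg hga0, abs_of_nonneg hgb0]
    ring
  have key2 : s^2 = (x - y)^2 + 2*(x*y - ip) := by
    rw [hsdef, norm_sub_sq_real]; ring
  have hT : 0 ≤ x*y - ip := by
    have := real_inner_le_norm P Q; simp only [← hxdef, ← hydef, ← hipdef] at this ⊢; linarith
  have hT2 : x*y - ip ≤ 2*(x*y) := by
    have h1 := abs_real_inner_le_norm P Q
    have h2 := neg_abs_le ⟪P, Q⟫
    simp only [← hxdef, ← hydef, ← hipdef] at h1 h2 ⊢
    linarith
  have hd : x - y ≤ s := norm_sub_norm_le P Q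
  have hs_le : s ≤ x + y := norm_sub_le P Q
  have hffx : ff p q b x = ga * x := rfl
  have hffy : ff p q b y = gb * y := rfl
  have hF0 : 0 ≤ ff p q b x - ff p q b y :=
    sub_nonneg.mpr (ff_mono hp hpq hb hy0 hyx)
  have hffy0 : 0 ≤ ff p q b y := ff_nonneg hy0
  have hffx0 : 0 ≤ ff p q b x := ff_nonneg hx0
  have dbl1 := ww_double hp hpq hb (u := 1+x) (v := M)
    (by linarith) (by simp only [hMdef]; linarith) (by simp only [hMdef]; linarith)
  rw [← hWdef, ← hKdef] at dbl1
  -- dbl1 : ww M ≤ K * ww (1+x) ∧ ww (1+x) ≤ K * ww M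
  have hnormsq : 0 ≤ ‖ga • P - gb • Q‖^2 := sq_nonneg _
  clear_value x y s ip ga gb M K W
  set NSQ := ‖ga • P - gb • Q‖^2 with hNSQdef
  clear_value NSQ
  clear hNSQdef hxdef hydef hsdef hipdef P Q
  rcases le_or_gt (2*y) x with hcase | hcase
  · -- Case 1 : 2y ≤ x
    have hyx2 : y ≤ x/2 := by linarith
    have hsx : s ≤ 2*x := by linarith
    have hxd : x ≤ 2*(x - y) := by linarith
    have dblr : ∀ r ∈ Icc (x/2) x, W ≤ K * ww p q b (1+r) ∧ ww p q b (1+r) ≤ K * W := by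
      intro r hr
      rw [hWdef, hKdef]
      exact ww_double hp hpq hb (u := 1+r) (v := M)
        (by linarith [hr.1]) (by simp only [hMdef]; linarith [hr.2])
        (by simp only [hMdef]; linarith [hr.1])
    set m := Real.sqrt (W/K) / 2 with hmdef
    have hm0 : 0 ≤ m := by positivity
    have hm : ∀ r ∈ Icc (x/2) x, m ≤ Real.sqrt (ww p q b (1+r)) / 2 := by
      intro r hr
      have h1 : W/K ≤ ww p q b (1+r) := by
        rw [div_le_iff₀ hK0]; linarith only [(dblr r hr).1]
      have h2 := Real.sqrt_le_sqrt h1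
      rw [hmdef]; linarith only [h2]
    have F1 := ff_sub_lower hp hpq hb (x := x) (y := x/2) (m := m)
      (by linarith) (by linarith) hm
    have hfy : ff p q b y ≤ ff p q b (x/2) := ff_mono hp hpq hb hy0 hyx2
    have hm2 : m^2 * (4*K) = W := by
      have h : (Real.sqrt (W/K))^2 = W/K := Real.sq_sqrt (div_nonneg hwM.le hK0.le)
      rw [hmdef, div_pow, h]
      have e : W/K/2^2*(4*K) = W * (K/K) := by ring
      rw [e, div_self (ne_of_gt hK0), mul_one]
    have hF : m * (x/2) ≤ ff p q b x - ff p q b y := by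
      have e : m*(x - x/2) = m*(x/2) := by ring
      linarith only [F1, hfy, e]
    constructor
    · -- lower : W * s^2 ≤ cst * NSQ
      have h1 : NSQ ≥ (ga*x - gb*y)^2 := by
        rw [key1]
        linarith only [mul_nonneg (mul_nonneg hga0 hgb0) hT]
      have hFx : m * x ≤ 2*(ga*x - gb*y) := by
        rw [← hffx, ← hffy]; linarith only [hF]
      have h2 : (m*x)^2 ≤ 4*(ga*x - gb*y)^2 := by
        have h := mul_self_le_mul_self (mul_nonneg hm0 hx0) hFx
        linarith only [h]
      have h3 : s^2 ≤ 4*x^2 := by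
        have h := mul_self_le_mul_self hs0 hsx
        linarith only [h]
      have c1 : W * s^2 ≤ W * (4*x^2) := mul_le_mul_of_nonneg_left h3 hwM.le
      have c2 : W * (4*x^2) = 16*K*(m*x)^2 := by rw [← hm2]; ring
      have c3 : 16*K*(m*x)^2 ≤ 16*K*(4*(ga*x - gb*y)^2) :=
        mul_le_mul_of_nonneg_left h2 (by positivity)
      have c4 : 64*K*(ga*x - gb*y)^2 ≤ 64*K*NSQ :=
        mul_le_mul_of_nonneg_left h1 (by positivity)
      have c5 : 64*K*NSQ ≤ 64 * K * (1+q)^2 * NSQ := by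
        have h5 : (1:ℝ) ≤ (1+q)^2 := one_le_pow₀ (by linarith)
        have h6 := mul_le_mul_of_nonneg_right
          (mul_le_mul_of_nonneg_left h5 (by positivity : (0:ℝ) ≤ 64*K)) hnormsq
        linarith only [h6]
      linarith only [c1, c3, c4, c5, c2]
    · -- upper : NSQ ≤ cst * (W * s^2)
      have hffxsq : (ff p q b x)^2 = ww p q b (1+x) * x^2 := by
        rw [hffx, hgadef, mul_pow, Real.sq_sqrt (ww_nonneg hp hpq hb (by linarith))]
      have h1 : (ga*x - gb*y)^2 ≤ (ff p q b x)^2 := by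
        rw [← hffx, ← hffy]
        have h := mul_self_le_mul_self hF0 (by linarith only [hffy0] :
          ff p q b x - ff p q b y ≤ ff p q b x)
        linarith only [h]
      have h2 : 2*(ga*gb)*(x*y - ip) ≤ 4*(ff p q b x)^2 := by
        have h3 := mul_le_mul_of_nonneg_left hT2 (mul_nonneg hga0 hgb0)
        have e1 : ga*gb*(x*y) = (ff p q b x)*(ff p q b y) := by
          rw [hffx, hffy]; ring
        have h4 : (ff p q b x)*(ff p q b y) ≤ (ff p q b x)*(ff p q b x) :=
          mul_le_mul_of_nonneg_left (ff_mono hp hpq hb hy0 hyx) hffx0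
        linarith only [h3, h4, e1]
      have h5 : x^2 ≤ 4*s^2 := by
        have hx2s : x ≤ 2*s := by linarith only [hxd, hd]
        have h := mul_self_le_mul_self hx0 hx2s
        linarith only [h]
      have c1 : NSQ ≤ 5*(ff p q b x)^2 := by rw [key1]; linarith only [h1, h2]
      have c2 : 5*(ff p q b x)^2 ≤ 5*(K*W*x^2) := by
        have h6 := mul_le_mul_of_nonneg_right dbl1.2 (sq_nonneg x)
        rw [hffxsq]; linarith only [h6]
      have c3 : 5*(K*W*x^2) ≤ 20*(K*W*s^2) := by
        have h7 := mul_le_mul_of_nonneg_left h5 (mul_nonneg hK0.le hwM.le)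
        linarith only [h7]
      have c4 : 20*(K*W*s^2) ≤ 64 * K * (1+q)^2 * (W*s^2) := by
        have h5' : (1:ℝ) ≤ (1+q)^2 := one_le_pow₀ (by linarith)
        have hX : 0 ≤ K*W*s^2 := mul_nonneg (mul_nonneg hK0.le hwM.le) (sq_nonneg s)
        have h8 := mul_le_mul_of_nonneg_right h5' hX
        linarith only [h8, hX]
      linarith only [c1, c2, c3, c4]
  · -- Case 2 : x < 2y
    have dblr : ∀ r ∈ Icc y x, W ≤ K * ww p q b (1+r) ∧ ww p q b (1+r) ≤ K * W := by
      intro r hr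
      rw [hWdef, hKdef]
      exact ww_double hp hpq hb (u := 1+r) (v := M)
        (by linarith [hr.1]) (by simp only [hMdef]; linarith [hr.2])
        (by simp only [hMdef]; linarith [hr.1])
    set m := Real.sqrt (W/K) / 2 with hmdef
    have hm0 : 0 ≤ m := by positivity
    have hm : ∀ r ∈ Icc y x, m ≤ Real.sqrt (ww p q b (1+r)) / 2 := by
      intro r hr
      have h1 : W/K ≤ ww p q b (1+r) := by
        rw [div_le_iff₀ hK0]; linarith only [(dblr r hr).1]
      have h2 := Real.sqrt_le_sqrt h1
      rw [hmdef]; linarith only [h2]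
    have hm2 : m^2 * (4*K) = W := by
      have h : (Real.sqrt (W/K))^2 = W/K := Real.sq_sqrt (div_nonneg hwM.le hK0.le)
      rw [hmdef, div_pow, h]
      have e : W/K/2^2*(4*K) = W * (K/K) := by ring
      rw [e, div_self (ne_of_gt hK0), mul_one]
    have F2 := ff_sub_lower hp hpq hb (x := x) (y := y) (m := m) hy0 hyx hm
    set C := (1+q/2) * Real.sqrt (K*W) with hCdef
    have hC : ∀ r ∈ Icc y x, (1+q/2) * Real.sqrt (ww p q b (1+r)) ≤ C := by
      intro r hr
      have h1 : ww p q b (1+r) ≤ K*W := (dblr r hr).2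
      have h2 := Real.sqrt_le_sqrt h1
      rw [hCdef]
      exact mul_le_mul_of_nonneg_left h2 (by linarith : (0:ℝ) ≤ 1+q/2)
    have F3 := ff_sub_upper hp hpq hb (x := x) (y := y) hy0 hyx hC
    have hC2 : C^2 = (1+q/2)^2*(K*W) := by
      rw [hCdef, mul_pow, Real.sq_sqrt (mul_nonneg hK0.le hwM.le)]
    have hgax : ww p q b (1+x) ≤ K*W := (dblr x ⟨hyx, le_refl x⟩).2
    have hgay : ww p q b (1+y) ≤ K*W := (dblr y ⟨le_refl y, hyx⟩).2
    have hgaxl : W/K ≤ ww p q b (1+x) := by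
      rw [div_le_iff₀ hK0]; linarith only [(dblr x ⟨hyx, le_refl x⟩).1]
    have hgayl : W/K ≤ ww p q b (1+y) := by
      rw [div_le_iff₀ hK0]; linarith only [(dblr y ⟨le_refl y, hyx⟩).1]
    have hgagb_up : ga*gb ≤ K*W := by
      have h1 : ga ≤ Real.sqrt (K*W) := by
        rw [hgadef]; exact Real.sqrt_le_sqrt hgax
      have h2 : gb ≤ Real.sqrt (K*W) := by
        rw [hgbdef]; exact Real.sqrt_le_sqrt hgay
      calc ga*gb ≤ Real.sqrt (K*W) * Real.sqrt (K*W) :=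
            mul_le_mul h1 h2 hgb0 (Real.sqrt_nonneg _)
        _ = K*W := Real.mul_self_sqrt (mul_nonneg hK0.le hwM.le)
    have hgagb_lo : W/K ≤ ga*gb := by
      have h1 : Real.sqrt (W/K) ≤ ga := by
        rw [hgadef]; exact Real.sqrt_le_sqrt hgaxl
      have h2 : Real.sqrt (W/K) ≤ gb := by
        rw [hgbdef]; exact Real.sqrt_le_sqrt hgayl
      calc W/K = Real.sqrt (W/K) * Real.sqrt (W/K) :=
            (Real.mul_self_sqrt (div_nonneg hwM.le hK0.le)).symm
        _ ≤ ga*gb := mul_le_mul h1 h2 (Real.sqrt_nonneg _) hga0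
    have hFd : m * (x - y) ≤ ga*x - gb*y := by
      rw [← hffx, ← hffy]; linarith only [F2]
    have hFdu : ga*x - gb*y ≤ C*(x - y) := by
      rw [← hffx, ← hffy]; linarith only [F3]
    have hdx : 0 ≤ x - y := by linarith
    have hWK : (W/K)*(x*y-ip) = 4*m^2*(x*y-ip) := by
      have e : W/K = 4*m^2 := by
        rw [← hm2]; field_simp
      rw [e]
    constructor
    · -- lower
      have h1 : (m*(x-y))^2 ≤ (ga*x - gb*y)^2 := by
        have h := mul_self_le_mul_self (mul_nonneg hm0 hdx) hFd
        linarith only [h]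
      have hlo := mul_le_mul_of_nonneg_right hgagb_lo hT
      have h2 : NSQ ≥ m^2*(x-y)^2 + 2*(4*m^2)*(x*y - ip) := by
        rw [key1]
        linarith only [h1, hlo, hWK]
      have h3 : W*s^2 = 4*K*(m^2*(x-y)^2) + 8*K*(m^2*(x*y-ip)) := by
        rw [← hm2, key2]; ring
      have h4 := mul_le_mul_of_nonneg_left h2 (by positivity : (0:ℝ) ≤ 4*K)
      have h5 : 0 ≤ K*(m^2*(x*y-ip)) :=
        mul_nonneg hK0.le (mul_nonneg (sq_nonneg m) hT)
      have c1 : W*s^2 ≤ 4*K*NSQ := by linarith only [h4, h5, h3]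
      have c2 : 4*K*NSQ ≤ 64 * K * (1+q)^2 * NSQ := by
        have h5' : (1:ℝ) ≤ (1+q)^2 := one_le_pow₀ (by linarith)
        have hX : 0 ≤ K*NSQ := mul_nonneg hK0.le hnormsq
        have h6 := mul_le_mul_of_nonneg_right h5' hX
        linarith only [h6, hX]
      linarith only [c1, c2]
    · -- upper
      have h1 : (ga*x - gb*y)^2 ≤ C^2*(x-y)^2 := by
        have h := mul_self_le_mul_self (le_trans (mul_nonneg hm0 hdx) hFd) hFdu
        linarith only [h]
      have hup := mul_le_mul_of_nonneg_right hgagb_up hT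
      have h2 : NSQ ≤ C^2*(x-y)^2 + 2*(K*W)*(x*y-ip) := by
        rw [key1]
        linarith only [h1, hup]
      have hCK : (1:ℝ) ≤ (1+q/2)^2 := one_le_pow₀ (by linarith)
      have h3 : C^2*(x-y)^2 + 2*(K*W)*(x*y-ip) ≤ (1+q/2)^2*(K*W)*s^2 := by
        rw [hC2, key2]
        have h6 := mul_le_mul_of_nonneg_right hCK
          (mul_nonneg (mul_nonneg hK0.le hwM.le) hT)
        linarith only [h6]
      have c4 : (1+q/2)^2*(K*W)*s^2 ≤ 64 * K * (1+q)^2 * (W*s^2) := by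
        have h5' : (1+q/2)^2 ≤ 64*(1+q)^2 := by
          have hq0 : 0 ≤ q := by linarith
          nlinarith only [hq0, sq_nonneg q]
        have hX : 0 ≤ K*W*s^2 := mul_nonneg (mul_nonneg hK0.le hwM.le) (sq_nonneg s)
        have h8 := mul_le_mul_of_nonneg_right h5' hX
        linarith only [h8]
      linarith only [h2, h3, c4]

lemma hard {p q b : ℝ} (hp : 1 < p) (hpq : p ≤ q) (hb : 0 ≤ b)
    {E : Type*} [NormedAddCommGroup E] [InnerProductSpace ℝ E] (P Q : E) :
    Comp (64 * 4^q * (1+q)^2)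
      (‖Real.sqrt (ww p q b (1+‖P‖)) • P - Real.sqrt (ww p q b (1+‖Q‖)) • Q‖^2)
      (ww p q b (1+‖P‖+‖Q‖) * ‖P-Q‖^2) := by
  rcases le_total ‖Q‖ ‖P‖ with h | h
  · have H := hard_aux hp hpq hb P Q h
    exact ⟨H.2, H.1⟩
  · have H := hard_aux hp hpq hb Q P h
    have e1 : 1 + ‖Q‖ + ‖P‖ = 1 + ‖P‖ + ‖Q‖ := by ring
    have e2 : ‖Q - P‖ = ‖P - Q‖ := norm_sub_rev Q P
    have e3 : ‖Real.sqrt (ww p q b (1+‖Q‖)) • Q - Real.sqrt (ww p q b (1+‖P‖)) • P‖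
        = ‖Real.sqrt (ww p q b (1+‖P‖)) • P - Real.sqrt (ww p q b (1+‖Q‖)) • Q‖ :=
      norm_sub_rev _ _
    rw [e1, e2, e3] at H
    exact ⟨H.2, H.1⟩

lemma intInteg {r σ s c : ℝ} (hσ : 1 ≤ σ) (hs : 0 ≤ s) {a b : ℝ}
    (ha : 0 ≤ a) (hab : a ≤ b) (hbs : b ≤ s) :
    IntervalIntegrable (fun t => c * ((σ + t) ^ (r-2) * t)) volume a b := by
  apply ContinuousOn.intervalIntegrable
  have huIcc : uIcc a b = Icc a b := uIcc_of_le hab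
  rw [huIcc]
  apply ContinuousOn.mul continuousOn_const
  apply ContinuousOn.mul
  · apply ContinuousOn.rpow_const
    · exact (continuous_const.add continuous_id).continuousOn
    · intro t ht
      left
      have : 0 ≤ t := le_trans ha ht.1
      positivity
  · exact continuousOn_id

lemma integ_const_lin {c a b : ℝ} :
    (∫ t in a..b, c * t) = c * (b^2 - a^2) / 2 := by
  rw [intervalIntegral.integral_const_mul, integral_id]
  ring

lemma int_nonneg {r σ s : ℝ} (hr : 1 < r) (hσ : 1 ≤ σ) (hs : 0 ≤ s) :
    0 ≤ ∫ t in (0:ℝ)..s, r * ((σ + t) ^ (r-2) * t) := by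
  apply intervalIntegral.integral_nonneg hs
  intro t ht
  have h1 : (0:ℝ) < σ + t := by linarith [ht.1]
  have h2 : 0 ≤ t := ht.1
  positivity

lemma int_upper {r σ s : ℝ} (hr : 1 < r) (hσ : 1 ≤ σ) (hs : 0 ≤ s) :
    (∫ t in (0:ℝ)..s, r * ((σ + t) ^ (r-2) * t)) ≤ 2 * (r * ((σ+s) ^ (r-2) * s^2)) := by
  have hσs : (0:ℝ) < σ + s := by linarith
  have hr0 : (0:ℝ) < r := by linarith
  rcases le_or_gt 2 r with h2r | h2r
  · -- β ≥ 0 : integrand ≤ r * ((σ+s)^β * t)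
    have hmono : (∫ t in (0:ℝ)..s, r * ((σ + t) ^ (r-2) * t)) ≤
        ∫ t in (0:ℝ)..s, (r * (σ+s) ^ (r-2)) * t := by
      apply intervalIntegral.integral_mono_on hs
        (intInteg hσ hs le_rfl hs le_rfl)
      · apply ContinuousOn.intervalIntegrable
        exact (continuousOn_const.mul continuousOn_id)
      · intro t ht
        have h1 : (σ + t) ^ (r-2) ≤ (σ+s) ^ (r-2) :=
          Real.rpow_le_rpow (by linarith [ht.1] : (0:ℝ) ≤ σ + t) (by linarith [ht.2])
            (by linarith)
        have ht0 : 0 ≤ t := ht.1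
        calc r * ((σ + t) ^ (r-2) * t) = (r * (σ+t) ^ (r-2)) * t := by ring
          _ ≤ (r * (σ+s) ^ (r-2)) * t := by
              apply mul_le_mul_of_nonneg_right _ ht0
              exact mul_le_mul_of_nonneg_left h1 hr0.le
    rw [integ_const_lin] at hmono
    have hP : (0:ℝ) ≤ r * (σ+s)^(r-2) * s^2 := by positivity
    nlinarith only [hmono, hP]
  · -- β < 0
    rcases le_or_gt s σ with hsσ | hsσ
    · -- s ≤ σ : (σ+t)^β ≤ 2*(σ+s)^β
      have hkey : σ ^ (r-2) ≤ 2 * (σ+s)^(r-2) := by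
        have h1 : (2*σ) ^ (r-2) ≤ (σ+s) ^ (r-2) :=
          Real.rpow_le_rpow_of_nonpos (by linarith) (by linarith) (by linarith)
        have h2 : (2*σ) ^ (r-2) = 2^(r-2) * σ^(r-2) :=
          Real.mul_rpow (by norm_num) (by linarith)
        have h3 : σ ^ (r-2) = 2^(-(r-2)) * (2*σ)^(r-2) := by
          rw [h2, ← mul_assoc, ← Real.rpow_add (by norm_num : (0:ℝ) < 2)]
          norm_num
        have h4 : (2:ℝ)^(-(r-2)) ≤ 2^(1:ℝ) :=
          Real.rpow_le_rpow_of_exponent_le (by norm_num) (by linarith)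
        have h5 : (0:ℝ) < (2*σ)^(r-2) := Real.rpow_pos_of_pos (by linarith) _
        rw [h3]
        calc (2:ℝ)^(-(r-2)) * (2*σ)^(r-2) ≤ 2^(1:ℝ) * (2*σ)^(r-2) :=
              mul_le_mul_of_nonneg_right h4 h5.le
          _ = 2 * (2*σ)^(r-2) := by rw [Real.rpow_one]
          _ ≤ 2 * (σ+s)^(r-2) := by linarith [h1]
      have hmono : (∫ t in (0:ℝ)..s, r * ((σ + t) ^ (r-2) * t)) ≤
          ∫ t in (0:ℝ)..s, (r * (2*(σ+s) ^ (r-2))) * t := by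
        apply intervalIntegral.integral_mono_on hs
          (intInteg hσ hs le_rfl hs le_rfl)
        · exact ContinuousOn.intervalIntegrable (continuousOn_const.mul continuousOn_id)
        · intro t ht
          have h1 : (σ + t) ^ (r-2) ≤ σ ^ (r-2) :=
            Real.rpow_le_rpow_of_nonpos (by linarith) (by linarith [ht.1]) (by linarith)
          have ht0 : 0 ≤ t := ht.1
          calc r * ((σ + t) ^ (r-2) * t) = (r * (σ+t)^(r-2)) * t := by ring
            _ ≤ (r * (2*(σ+s)^(r-2))) * t := by
                apply mul_le_mul_of_nonneg_right _ ht0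
                apply mul_le_mul_of_nonneg_left _ hr0.le
                linarith [hkey, h1]
      rw [integ_const_lin] at hmono
      have hP : (0:ℝ) ≤ r * (σ+s)^(r-2) * s^2 := by positivity
      nlinarith only [hmono, hP]
    · -- σ < s : integrand ≤ r * t^(r-1), ∫ = s^r ≤ 2(σ+s)^(r-2)s²
      have hs0 : (0:ℝ) < s := by linarith
      have hmono : (∫ t in (0:ℝ)..s, r * ((σ + t) ^ (r-2) * t)) ≤
          ∫ t in (0:ℝ)..s, r * t^(r-1) := by
        apply intervalIntegral.integral_mono_on hs
          (intInteg hσ hs le_rfl hs le_rfl)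
        · apply ContinuousOn.intervalIntegrable
          apply ContinuousOn.mul continuousOn_const
          apply ContinuousOn.rpow_const continuousOn_id
          intro t ht
          right; linarith
        · intro t ht
          rcases eq_or_lt_of_le ht.1 with h0 | h0
          · rw [← h0, Real.zero_rpow (show r - 1 ≠ 0 by intro h; linarith [h])]
            simp
          · have h1 : (σ + t) ^ (r-2) ≤ t ^ (r-2) :=
              Real.rpow_le_rpow_of_nonpos h0 (by linarith) (by linarith)
            have h2 : t ^ (r-2) * t = t ^ (r-1) := by
              rw [← Real.rpow_add_one (ne_of_gt h0)]; ring_nf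
            calc r * ((σ + t) ^ (r-2) * t) ≤ r * (t ^ (r-2) * t) := by
                  apply mul_le_mul_of_nonneg_left _ hr0.le
                  exact mul_le_mul_of_nonneg_right h1 (le_of_lt h0)
              _ = r * t^(r-1) := by rw [h2]
      have hint : (∫ t in (0:ℝ)..s, r * t^(r-1)) = s ^ r := by
        have e : r - 1 + 1 = r := by ring
        rw [intervalIntegral.integral_const_mul, integral_rpow (Or.inl (by linarith)),
          Real.zero_rpow (show r - 1 + 1 ≠ 0 by intro h; linarith [h]), e, sub_zero]
        field_simp
      have hsr : s ^ r ≤ 2 * ((σ+s)^(r-2) * s^2) := by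
        have e1 : s ^ r = s^(r-2) * s^(2:ℝ) := by
          rw [← Real.rpow_add hs0]; ring_nf
        have e2 : s^(2:ℝ) = s^(2:ℕ) := by
          rw [← Real.rpow_natCast s 2]; norm_num
        have h1 : (2*s) ^ (r-2) ≤ (σ+s) ^ (r-2) :=
          Real.rpow_le_rpow_of_nonpos (by linarith) (by linarith) (by linarith)
        have h2 : (2*s) ^ (r-2) = 2^(r-2) * s^(r-2) :=
          Real.mul_rpow (by norm_num) hs0.le
        have h3 : s ^ (r-2) = 2^(-(r-2)) * (2*s)^(r-2) := by
          rw [h2, ← mul_assoc, ← Real.rpow_add (by norm_num : (0:ℝ) < 2)]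
          norm_num
        have h4 : (2:ℝ)^(-(r-2)) ≤ 2^(1:ℝ) :=
          Real.rpow_le_rpow_of_exponent_le (by norm_num) (by linarith)
        have h5 : (0:ℝ) < (2*s)^(r-2) := Real.rpow_pos_of_pos (by linarith) _
        have h6 : s ^ (r-2) ≤ 2 * (σ+s)^(r-2) := by
          rw [h3]
          calc (2:ℝ)^(-(r-2)) * (2*s)^(r-2) ≤ 2^(1:ℝ) * (2*s)^(r-2) :=
                mul_le_mul_of_nonneg_right h4 h5.le
            _ = 2 * (2*s)^(r-2) := by rw [Real.rpow_one]
            _ ≤ 2 * (σ+s)^(r-2) := by linarith [h1]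
        calc s ^ r = s^(r-2) * s^2 := by rw [e1, e2]
          _ ≤ (2 * (σ+s)^(r-2)) * s^2 := mul_le_mul_of_nonneg_right h6 (sq_nonneg s)
          _ = 2 * ((σ+s)^(r-2) * s^2) := by ring
      have hP : (0:ℝ) ≤ (σ+s)^(r-2) * s^2 := by positivity
      have : (1:ℝ) ≤ r := hr.le
      nlinarith only [hmono, hint, hsr, hP, this]

lemma int_lower {r σ s : ℝ} (hr : 1 < r) (hσ : 1 ≤ σ) (hs : 0 ≤ s) :
    r * ((σ+s) ^ (r-2) * s^2) ≤
      (3 * 2^r) * ∫ t in (0:ℝ)..s, r * ((σ + t) ^ (r-2) * t) := by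
  have hσs : (0:ℝ) < σ + s := by linarith
  have hr0 : (0:ℝ) < r := by linarith
  have hJ0 : 0 ≤ ∫ t in (0:ℝ)..s, r * ((σ + t) ^ (r-2) * t) := int_nonneg hr hσ hs
  have h2r : (2:ℝ) ≤ 2^r := by
    calc (2:ℝ) = 2^(1:ℝ) := (Real.rpow_one 2).symm
      _ ≤ 2^r := Real.rpow_le_rpow_of_exponent_le (by norm_num) hr.le
  rcases le_or_gt 2 r with h2 | h2
  · -- β ≥ 0 : use [s/2, s]
    have hsplit : (∫ t in (0:ℝ)..(s/2), r * ((σ + t) ^ (r-2) * t)) +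
        (∫ t in (s/2)..s, r * ((σ + t) ^ (r-2) * t)) =
        ∫ t in (0:ℝ)..s, r * ((σ + t) ^ (r-2) * t) :=
      intervalIntegral.integral_add_adjacent_intervals
        (intInteg hσ hs le_rfl (by linarith) (by linarith))
        (intInteg hσ hs (by linarith) (by linarith) le_rfl)
    have hJ1 : 0 ≤ ∫ t in (0:ℝ)..(s/2), r * ((σ + t) ^ (r-2) * t) := by
      apply intervalIntegral.integral_nonneg (by linarith)
      intro t ht
      have h1 : (0:ℝ) < σ + t := by linarith [ht.1]
      have h2 : 0 ≤ t := ht.1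
      positivity
    have hmono : (∫ t in (s/2)..s, (r * (σ+s/2) ^ (r-2)) * t) ≤
        ∫ t in (s/2)..s, r * ((σ + t) ^ (r-2) * t) := by
      apply intervalIntegral.integral_mono_on (by linarith)
      · exact ContinuousOn.intervalIntegrable (continuousOn_const.mul continuousOn_id)
      · exact intInteg hσ hs (by linarith) (by linarith) le_rfl
      · intro t ht
        have h1 : (σ + s/2) ^ (r-2) ≤ (σ+t) ^ (r-2) :=
          Real.rpow_le_rpow (by linarith) (by linarith [ht.1]) (by linarith)
        have ht0 : 0 ≤ t := by linarith [ht.1]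
        calc (r * (σ+s/2) ^ (r-2)) * t ≤ (r * (σ+t) ^ (r-2)) * t := by
              apply mul_le_mul_of_nonneg_right _ ht0
              exact mul_le_mul_of_nonneg_left h1 hr0.le
          _ = r * ((σ + t) ^ (r-2) * t) := by ring
    rw [integ_const_lin] at hmono
    -- (σ+s)^β ≤ 2^(r-2) * (σ+s/2)^β
    have hkey : (σ+s) ^ (r-2) ≤ 2^(r-2) * (σ+s/2)^(r-2) := by
      have h1 : (σ+s) ^ (r-2) ≤ (2*(σ+s/2)) ^ (r-2) :=
        Real.rpow_le_rpow hσs.le (by linarith) (by linarith)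
      have h2 : (2*(σ+s/2)) ^ (r-2) = 2^(r-2) * (σ+s/2)^(r-2) :=
        Real.mul_rpow (by norm_num) (by linarith)
      linarith [h1, h2.le, h2.ge]
    have h2b : (2:ℝ)^(r-2) ≤ 2^r :=
      Real.rpow_le_rpow_of_exponent_le (by norm_num) (by linarith)
    have hpos1 : (0:ℝ) < (σ+s/2)^(r-2) := Real.rpow_pos_of_pos (by linarith) _
    have hpos2 : (0:ℝ) < (2:ℝ)^(r-2) := Real.rpow_pos_of_pos (by norm_num) _
    -- r*(σ+s)^β*s² ≤ r*2^(r-2)*(σ+s/2)^β*s² = (8/3)*2^(r-2)*(3/8)r(σ+s/2)^β s²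
    have step1 : r * ((σ+s) ^ (r-2) * s^2) ≤ 2^(r-2) * (r * ((σ+s/2)^(r-2) * s^2)) := by
      have := mul_le_mul_of_nonneg_right hkey (sq_nonneg s)
      have := mul_le_mul_of_nonneg_left this hr0.le
      linarith only [this]
    have step2 : r * ((σ+s/2)^(r-2) * s^2) ≤
        (8/3) * (r * (σ+s/2) ^ (r-2) * (s^2 - (s/2)^2) / 2) := by
      have e : (8/3) * (r * (σ+s/2) ^ (r-2) * (s^2 - (s/2)^2) / 2) =
          r * ((σ+s/2)^(r-2) * s^2) := by ring
      linarith only [e]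
    have step3 : r * (σ+s/2) ^ (r-2) * (s^2 - (s/2)^2) / 2 ≤
        ∫ t in (0:ℝ)..s, r * ((σ + t) ^ (r-2) * t) := by
      linarith only [hmono, hJ1, hsplit]
    -- combine: LHS ≤ 2^(r-2) * (8/3) * J ≤ 3*2^r*J
    have step4 : r * ((σ+s) ^ (r-2) * s^2) ≤
        (2^(r-2) * (8/3)) * ∫ t in (0:ℝ)..s, r * ((σ + t) ^ (r-2) * t) := by
      have h6 := mul_le_mul_of_nonneg_left step3 (by positivity : (0:ℝ) ≤ 2^(r-2) * (8/3))
      nlinarith only [step1, step2, h6, hpos2, step3]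
    have step5 : (2^(r-2) * (8/3)) * (∫ t in (0:ℝ)..s, r * ((σ + t) ^ (r-2) * t)) ≤
        (3 * 2^r) * ∫ t in (0:ℝ)..s, r * ((σ + t) ^ (r-2) * t) := by
      apply mul_le_mul_of_nonneg_right _ hJ0
      nlinarith only [h2b, hpos2]
    linarith only [step4, step5]
  · -- β < 0 : (σ+s)^β ≤ (σ+t)^β pointwise
    have hmono : (∫ t in (0:ℝ)..s, (r * (σ+s) ^ (r-2)) * t) ≤
        ∫ t in (0:ℝ)..s, r * ((σ + t) ^ (r-2) * t) := by
      apply intervalIntegral.integral_mono_on hs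
      · exact ContinuousOn.intervalIntegrable (continuousOn_const.mul continuousOn_id)
      · exact intInteg hσ hs le_rfl hs le_rfl
      · intro t ht
        have h1 : (σ + s) ^ (r-2) ≤ (σ+t) ^ (r-2) :=
          Real.rpow_le_rpow_of_nonpos (by linarith [ht.1]) (by linarith [ht.2]) (by linarith)
        have ht0 : 0 ≤ t := ht.1
        calc (r * (σ+s) ^ (r-2)) * t ≤ (r * (σ+t) ^ (r-2)) * t := by
              apply mul_le_mul_of_nonneg_right _ ht0
              exact mul_le_mul_of_nonneg_left h1 hr0.le
          _ = r * ((σ + t) ^ (r-2) * t) := by ring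
    rw [integ_const_lin] at hmono
    have h6 : (2:ℝ) ≤ 3 * 2^r := by linarith
    nlinarith only [hmono, hJ0, h6, h2r]


lemma comp_trans {c1 c2 x y z : ℝ} (h1 : Comp c1 x y) (h2 : Comp c2 y z)
    (hc1 : 0 ≤ c1) (hc2 : 0 ≤ c2) : Comp (c1*c2) x z := by
  constructor
  · calc x ≤ c1*y := h1.1
      _ ≤ c1*(c2*z) := mul_le_mul_of_nonneg_left h2.1 hc1
      _ = c1*c2*z := by ring
  · calc z ≤ c2*y := h2.2
      _ ≤ c2*(c1*x) := mul_le_mul_of_nonneg_left h1.2 hc2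
      _ = c1*c2*x := by ring

lemma comp_glue {c x y e : ℝ} (h1 : Comp c x e) (h2 : Comp c y e) (hc : 0 ≤ c) :
    Comp (c*c) x y := by
  constructor
  · calc x ≤ c*e := h1.1
      _ ≤ c*(c*y) := mul_le_mul_of_nonneg_left h2.2 hc
      _ = c*c*y := by ring
  · calc y ≤ c*e := h2.1
      _ ≤ c*(c*x) := mul_le_mul_of_nonneg_left h1.2 hc
      _ = c*c*x := by ring

lemma comp_mono {c c' x y : ℝ} (h : Comp c x y) (hcc : c ≤ c') (hx : 0 ≤ x) (hy : 0 ≤ y) :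
    Comp c' x y :=
  ⟨le_trans h.1 (mul_le_mul_of_nonneg_right hcc hy),
   le_trans h.2 (mul_le_mul_of_nonneg_right hcc hx)⟩

lemma comp_add {c a x1 x2 y1 y2 : ℝ} (h1 : Comp c x1 y1) (h2 : Comp c x2 y2) (ha : 0 ≤ a) :
    Comp c (x1 + a*x2) (y1 + a*y2) := by
  constructor
  · have := mul_le_mul_of_nonneg_left h2.1 ha
    linarith only [h1.1, this]
  · have := mul_le_mul_of_nonneg_left h2.2 ha
    linarith only [h1.2, this]

lemma comp_congr {c x x' y y' : ℝ} (hx : x = x') (hy : y = y') (h : Comp c x y) :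
    Comp c x' y' := hx ▸ hy ▸ h

lemma comp_self {c x : ℝ} (hx : 0 ≤ x) (hc : 1 ≤ c) : Comp c x x :=
  ⟨le_mul_of_one_le_left hx hc, le_mul_of_one_le_left hx hc⟩

lemma pow_comp {q β u v : ℝ} (hq1 : 1 ≤ q) (hβl : (-1:ℝ) ≤ β) (hβu : β ≤ q)
    (hu : 1 ≤ u) (hv : 1 ≤ v) (huv : u ≤ 4*v) (hvu : v ≤ 4*u) :
    u ^ β ≤ 4 ^ q * v ^ β ∧ v ^ β ≤ 4 ^ q * u ^ β := by
  rcases le_total u v with h | h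
  · have H := rpow_double hq1 hβl hβu hu h hvu
    exact ⟨H.2, H.1⟩
  · have H := rpow_double hq1 hβl hβu hv h huv
    exact ⟨H.1, H.2⟩

lemma ww_zero (p q t : ℝ) : ww p q 0 t = p * t ^ (p-2) := by unfold ww; ring

lemma VH_eq {p q a : ℝ} {E : Type*} [NormedAddCommGroup E] [NormedSpace ℝ E] (R : E) :
    VH p q a R = Real.sqrt (ww p q a (1+‖R‖)) • R := by
  unfold VH
  have ht : (0:ℝ) < 1 + ‖R‖ := by positivity
  have e : dpH' p q a (1+‖R‖) / (1+‖R‖) = ww p q a (1+‖R‖) := by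
    unfold dpH' ww
    rw [show p-2 = p-1-1 by ring, show q-2 = q-1-1 by ring,
      Real.rpow_sub_one (ne_of_gt ht) (p-1), Real.rpow_sub_one (ne_of_gt ht) (q-1)]
    field_simp
  rw [e]

lemma Vpow_eq {r q' : ℝ} {E : Type*} [NormedAddCommGroup E] [NormedSpace ℝ E] (R : E) :
    Vpow r R = Real.sqrt (ww r q' 0 (1+‖R‖)) • R := by
  unfold Vpow
  rw [ww_zero]

lemma shifted_pow_eq {r σ s : ℝ} (hr : 1 < r) (hσ : 1 ≤ σ) (hs : 0 ≤ s) :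
    shifted (fun u => r * u ^ (r-1)) σ s = ∫ t in (0:ℝ)..s, r * ((σ+t) ^ (r-2) * t) := by
  unfold shifted
  apply intervalIntegral.integral_congr
  intro t ht
  rw [uIcc_of_le hs] at ht
  have h1 : (0:ℝ) < σ + t := by linarith [ht.1]
  simp only
  rw [show r-2 = r-1-1 by ring, Real.rpow_sub_one (ne_of_gt h1) (r-1)]
  field_simp

lemma shifted_split {p q a σ s : ℝ} (hp : 1 < p) (hpq : p ≤ q) (ha : 0 ≤ a)
    (hσ : 1 ≤ σ) (hs : 0 ≤ s) :
    shifted (dpH' p q a) σ s =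
      shifted (fun u => p * u ^ (p-1)) σ s + a * shifted (fun u => q * u ^ (q-1)) σ s := by
  have hq1 : 1 < q := lt_of_lt_of_le hp hpq
  rw [shifted_pow_eq hp hσ hs, shifted_pow_eq hq1 hσ hs]
  unfold shifted
  have e1 : ∀ t ∈ uIcc (0:ℝ) s, dpH' p q a (σ+t) * t / (σ+t) =
      p * ((σ+t) ^ (p-2) * t) + a * (q * ((σ+t) ^ (q-2) * t)) := by
    intro t ht
    rw [uIcc_of_le hs] at ht
    have h1 : (0:ℝ) < σ + t := by linarith [ht.1]
    unfold dpH'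
    rw [show p-2 = p-1-1 by ring, show q-2 = q-1-1 by ring,
      Real.rpow_sub_one (ne_of_gt h1) (p-1), Real.rpow_sub_one (ne_of_gt h1) (q-1)]
    field_simp
  rw [intervalIntegral.integral_congr e1]
  rw [intervalIntegral.integral_add (intInteg hσ hs le_rfl hs le_rfl)
    ((intInteg hσ hs le_rfl hs le_rfl (c := q)).const_mul a)]
  rw [intervalIntegral.integral_const_mul, intervalIntegral.integral_const_mul]

lemma shifted_comp {r σ s : ℝ} (hr : 1 < r) (hσ : 1 ≤ σ) (hs : 0 ≤ s) :
    Comp (3 * 2^r) (shifted (fun u => r * u ^ (r-1)) σ s) (r * ((σ+s) ^ (r-2) * s^2)) := by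
  rw [shifted_pow_eq hr hσ hs]
  have h2r : (2:ℝ) ≤ 2^r := by
    calc (2:ℝ) = 2^(1:ℝ) := (Real.rpow_one 2).symm
      _ ≤ 2^r := Real.rpow_le_rpow_of_exponent_le (by norm_num) hr.le
  constructor
  · have hu := int_upper hr hσ hs
    have hP : (0:ℝ) ≤ r * ((σ+s)^(r-2) * s^2) := by
      have : (0:ℝ) < σ + s := by linarith
      positivity
    nlinarith only [hu, hP, h2r]
  · exact int_lower hr hσ hs

/-- For the double phase function `H(s) = s^p + a·s^q` (`1 < p ≤ q`, `a ≥ 0`), the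
quantities `|V_H(P)−V_H(Q)|²`, `H_{1+|Q|}(|P−Q|)`,
`φ_{p,1+|Q|}(|P−Q|) + a·φ_{q,1+|Q|}(|P−Q|)` and `|V_p(P)−V_p(Q)|² + a·|V_q(P)−V_q(Q)|²`
are pairwise comparable, and `|V_H(P)−V_H(Q)|² ≥ c⁻¹·|V_p(P)−V_p(Q)|²`. -/
theorem double_phase_V_equivalences (N n : ℕ) (p q a : ℝ)
    (hp : 1 < p) (hpq : p ≤ q) (ha : 0 ≤ a) :
    ∃ c : ℝ, 1 ≤ c ∧ ∀ P Q : EuclideanSpace ℝ (Fin N × Fin n),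
      Comp c (‖VH p q a P - VH p q a Q‖ ^ 2) (shifted (dpH' p q a) (1 + ‖Q‖) ‖P - Q‖) ∧
      Comp c (‖VH p q a P - VH p q a Q‖ ^ 2)
        (shifted (fun u => p * u ^ (p - 1)) (1 + ‖Q‖) ‖P - Q‖ +
          a * shifted (fun u => q * u ^ (q - 1)) (1 + ‖Q‖) ‖P - Q‖) ∧
      Comp c (shifted (dpH' p q a) (1 + ‖Q‖) ‖P - Q‖)
        (shifted (fun u => p * u ^ (p - 1)) (1 + ‖Q‖) ‖P - Q‖ +
          a * shifted (fun u => q * u ^ (q - 1)) (1 + ‖Q‖) ‖P - Q‖) ∧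
      Comp c (‖VH p q a P - VH p q a Q‖ ^ 2)
        (‖Vpow p P - Vpow p Q‖ ^ 2 + a * ‖Vpow q P - Vpow q Q‖ ^ 2) ∧
      Comp c (shifted (dpH' p q a) (1 + ‖Q‖) ‖P - Q‖)
        (‖Vpow p P - Vpow p Q‖ ^ 2 + a * ‖Vpow q P - Vpow q Q‖ ^ 2) ∧
      Comp c (shifted (fun u => p * u ^ (p - 1)) (1 + ‖Q‖) ‖P - Q‖ +
          a * shifted (fun u => q * u ^ (q - 1)) (1 + ‖Q‖) ‖P - Q‖)
        (‖Vpow p P - Vpow p Q‖ ^ 2 + a * ‖Vpow q P - Vpow q Q‖ ^ 2) ∧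
      c⁻¹ * ‖Vpow p P - Vpow p Q‖ ^ 2 ≤ ‖VH p q a P - VH p q a Q‖ ^ 2 := by
  have hq1 : 1 < q := lt_of_lt_of_le hp hpq
  have hp0 : (0:ℝ) < p := by linarith
  have hq0 : (0:ℝ) < q := by linarith
  have hK0 : (0:ℝ) < 4^q := Real.rpow_pos_of_pos (by norm_num) q
  have h2p0 : (0:ℝ) < 2^p := Real.rpow_pos_of_pos (by norm_num) p
  have h2q0 : (0:ℝ) < 2^q := Real.rpow_pos_of_pos (by norm_num) q
  have hK1 : (1:ℝ) ≤ 4^q := Real.one_le_rpow (by norm_num) (by linarith)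
  have hsq1 : (1:ℝ) ≤ (1+q)^2 := one_le_pow₀ (by linarith)
  set c1 : ℝ := 64 * 4^q * (1+q)^2 with hc1def
  set c2 : ℝ := (3 * 2^p) * 4^q with hc2def
  set c3 : ℝ := (3 * 2^q) * 4^q with hc3def
  have hc1pos : 0 < c1 := by rw [hc1def]; nlinarith only [hK0, hK1, hsq1]
  have hc2pos : 0 < c2 := by rw [hc2def]; nlinarith only [hK0, h2p0]
  have hc3pos : 0 < c3 := by rw [hc3def]; nlinarith only [hK0, h2q0]
  set c0 : ℝ := c1 + c2 + c3 with hc0def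
  have hc0pos : 0 < c0 := by rw [hc0def]; linarith
  have hc01 : 1 ≤ c0 := by
    rw [hc0def, hc1def]
    nlinarith only [hK1, hsq1, hc2pos, hc3pos]
  have hc1c0 : c1 ≤ c0 := by rw [hc0def]; linarith
  have hc2c0 : c2 ≤ c0 := by rw [hc0def]; linarith
  have hc3c0 : c3 ≤ c0 := by rw [hc0def]; linarith
  refine ⟨c0^2, by nlinarith only [hc01, hc0pos], fun P Q => ?_⟩
  set x := ‖P‖ with hxdef
  set y := ‖Q‖ with hydef
  set s := ‖P - Q‖ with hsdef
  have hx0 : 0 ≤ x := norm_nonneg P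
  have hy0 : 0 ≤ y := norm_nonneg Q
  have hs0 : 0 ≤ s := norm_nonneg _
  have hσ : (1:ℝ) ≤ 1 + y := by linarith
  set M := 1 + x + y with hMdef
  have hM1 : (1:ℝ) ≤ M := by rw [hMdef]; linarith
  have hM0 : (0:ℝ) < M := by linarith
  have hsxy : s ≤ x + y := norm_sub_le P Q
  have hxys : x ≤ y + s := by
    have := norm_sub_norm_le P Q
    rw [← hxdef, ← hydef, ← hsdef] at this; linarith
  -- central quantities
  have hEp0 : (0:ℝ) ≤ p * (M^(p-2) * s^2) := by positivity
  have hEq0 : (0:ℝ) ≤ q * (M^(q-2) * s^2) := by positivity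
  have hEH0 : (0:ℝ) ≤ ww p q a M * s^2 :=
    mul_nonneg (ww_nonneg hp hpq ha hM0) (sq_nonneg s)
  have eEH : p * (M^(p-2) * s^2) + a * (q * (M^(q-2) * s^2)) = ww p q a M * s^2 := by
    unfold ww; ring
  -- A : the VH quantity
  have hA : Comp c1 (‖VH p q a P - VH p q a Q‖^2) (ww p q a M * s^2) := by
    rw [VH_eq P, VH_eq Q, hc1def]
    exact hard hp hpq ha P Q
  have hA0 : (0:ℝ) ≤ ‖VH p q a P - VH p q a Q‖^2 := sq_nonneg _
  -- Dp, Dq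
  have hDp : Comp c1 (‖Vpow p P - Vpow p Q‖^2) (p * (M^(p-2) * s^2)) := by
    have h := hard hp hpq le_rfl P Q (b := 0)
    rw [← Vpow_eq P, ← Vpow_eq Q] at h
    have e : ww p q 0 M * s^2 = p * (M^(p-2) * s^2) := by rw [ww_zero]; ring
    rw [hc1def]
    exact comp_congr rfl e h
  have hDq : Comp c1 (‖Vpow q P - Vpow q Q‖^2) (q * (M^(q-2) * s^2)) := by
    have h := hard hq1 le_rfl le_rfl P Q (b := 0)
    rw [← Vpow_eq P, ← Vpow_eq Q] at h
    have e : ww q q 0 M * s^2 = q * (M^(q-2) * s^2) := by rw [ww_zero]; ring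
    rw [hc1def]
    exact comp_congr rfl e h
  have hDp0 : (0:ℝ) ≤ ‖Vpow p P - Vpow p Q‖^2 := sq_nonneg _
  have hDq0 : (0:ℝ) ≤ ‖Vpow q P - Vpow q Q‖^2 := sq_nonneg _
  -- Bp, Bq
  have htransfer : ∀ r : ℝ, 1 < r → r ≤ q →
      Comp (4^q) (r * ((1+y+s) ^ (r-2) * s^2)) (r * (M^(r-2) * s^2)) := by
    intro r hr hrq
    have hpc := pow_comp (q := q) (β := r-2) (u := 1+y+s) (v := M)
      (by linarith) (by linarith) (by linarith)
      (by linarith) hM1 (by rw [hMdef]; linarith) (by rw [hMdef]; linarith)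
    have hrs : (0:ℝ) ≤ r * s^2 := by positivity
    constructor
    · have := mul_le_mul_of_nonneg_right hpc.1 hrs
      calc r * ((1+y+s) ^ (r-2) * s^2) = (1+y+s)^(r-2) * (r * s^2) := by ring
        _ ≤ 4^q * M^(r-2) * (r*s^2) := by linarith only [this]
        _ = 4^q * (r * (M^(r-2) * s^2)) := by ring
    · have := mul_le_mul_of_nonneg_right hpc.2 hrs
      calc r * (M^(r-2) * s^2) = M^(r-2) * (r * s^2) := by ring
        _ ≤ 4^q * (1+y+s)^(r-2) * (r*s^2) := by linarith only [this]
        _ = 4^q * (r * ((1+y+s)^(r-2) * s^2)) := by ring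
  have hBp : Comp c2 (shifted (fun u => p * u ^ (p-1)) (1+y) s) (p * (M^(p-2) * s^2)) := by
    rw [hc2def]
    exact comp_trans (shifted_comp hp hσ hs0) (htransfer p hp hpq)
      (by positivity) hK0.le
  have hBq : Comp c3 (shifted (fun u => q * u ^ (q-1)) (1+y) s) (q * (M^(q-2) * s^2)) := by
    rw [hc3def]
    exact comp_trans (shifted_comp hq1 hσ hs0) (htransfer q hq1 le_rfl)
      (by positivity) hK0.le
  have hBp0 : 0 ≤ shifted (fun u => p * u ^ (p-1)) (1+y) s := by
    rw [shifted_pow_eq hp hσ hs0]; exact int_nonneg hp hσ hs0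
  have hBq0 : 0 ≤ shifted (fun u => q * u ^ (q-1)) (1+y) s := by
    rw [shifted_pow_eq hq1 hσ hs0]; exact int_nonneg hq1 hσ hs0
  have hsplit : shifted (dpH' p q a) (1+y) s =
      shifted (fun u => p * u ^ (p-1)) (1+y) s +
        a * shifted (fun u => q * u ^ (q-1)) (1+y) s :=
    shifted_split hp hpq ha hσ hs0
  -- bundle at level c0 versus EH
  have CA : Comp c0 (‖VH p q a P - VH p q a Q‖^2) (ww p q a M * s^2) :=
    comp_mono hA hc1c0 hA0 hEH0
  have CC : Comp c0 (shifted (fun u => p * u ^ (p-1)) (1+y) s +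
      a * shifted (fun u => q * u ^ (q-1)) (1+y) s) (ww p q a M * s^2) := by
    refine comp_congr rfl eEH (comp_add ?_ ?_ ha)
    · exact comp_mono hBp hc2c0 hBp0 hEp0
    · exact comp_mono hBq hc3c0 hBq0 hEq0
  have CD : Comp c0 (‖Vpow p P - Vpow p Q‖^2 + a * ‖Vpow q P - Vpow q Q‖^2)
      (ww p q a M * s^2) := by
    refine comp_congr rfl eEH (comp_add ?_ ?_ ha)
    · exact comp_mono hDp hc1c0 hDp0 hEp0
    · exact comp_mono hDq hc1c0 hDq0 hEq0
  have hC0 : 0 ≤ shifted (fun u => p * u ^ (p-1)) (1+y) s +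
      a * shifted (fun u => q * u ^ (q-1)) (1+y) s := by positivity
  have e2 : c0 * c0 = c0^2 := by ring
  refine ⟨?_, ?_, ?_, ?_, ?_, ?_, ?_⟩
  · rw [hsplit]
    exact comp_congr rfl rfl (e2 ▸ comp_glue CA CC hc0pos.le)
  · exact e2 ▸ comp_glue CA CC hc0pos.le
  · rw [hsplit]
    exact comp_self hC0 (by nlinarith only [hc01])
  · exact e2 ▸ comp_glue CA CD hc0pos.le
  · rw [hsplit]
    exact e2 ▸ comp_glue CC CD hc0pos.le
  · exact e2 ▸ comp_glue CC CD hc0pos.le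
  · -- (c0^2)⁻¹ * Dp ≤ A
    have h1 : ‖Vpow p P - Vpow p Q‖^2 ≤ c0 * (ww p q a M * s^2) := by
      have h2 : p * (M^(p-2) * s^2) ≤ ww p q a M * s^2 := by
        have h3 : 0 ≤ a * (q * (M^(q-2) * s^2)) := mul_nonneg ha hEq0
        linarith only [eEH, h3]
      have := comp_mono hDp hc1c0 hDp0 hEp0
      calc ‖Vpow p P - Vpow p Q‖^2 ≤ c0 * (p * (M^(p-2) * s^2)) := this.1
        _ ≤ c0 * (ww p q a M * s^2) := mul_le_mul_of_nonneg_left h2 hc0pos.le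
    have h4 : ‖Vpow p P - Vpow p Q‖^2 ≤ c0^2 * ‖VH p q a P - VH p q a Q‖^2 := by
      calc ‖Vpow p P - Vpow p Q‖^2 ≤ c0 * (ww p q a M * s^2) := h1
        _ ≤ c0 * (c0 * ‖VH p q a P - VH p q a Q‖^2) :=
            mul_le_mul_of_nonneg_left CA.2 hc0pos.le
        _ = c0^2 * ‖VH p q a P - VH p q a Q‖^2 := by ring
    have hc2pos' : (0:ℝ) < c0^2 := by positivity
    rw [inv_mul_le_iff₀ hc2pos']
    exact h4
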